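/- Assume that Ω^1_{R/K} is a free R-module with basis dx^1,…,dx^d for elements x^1,…,x^d ∈ R. Let y^1,…,y^d ∈ R and let Λ = (Λ^a_b) be the d×d matrix over R determined by dy^a = Σ_b Λ^a_b dx^b. Then in R^𝐝: (i) y^a_{(b)} = Σ_c Λ^a_c · x^c_{(b)} for all a, b, where Λ^a_c acts through the structure map R → R^𝐝; (ii) det((y^a_{(b)})_{a,b}) = det(Λ) · det((x^a_{(b)})_{a,b}); (iii) if moreover dy^1,…,dy^d is also a basis of Ω^1_{R/K} (equivalently, Λ is invertible over R), then the image of det(y^a_{(b)}) in the localization of R^𝐝 at det(x^a_{(b)}) is a unit, and the localizations of R^𝐝 at det(x^a_{(b)}) and at det(y^a_{(b)}) are isomorphic as R^𝐝-algebras. -/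

import Mathlib

/-!
The relations of `R^𝐝` in degrees `0` and `1` make `f ↦ f_{(c)}` a `K`-derivation
`R → R^𝐝`, so it factors through `df`. Hence `dy^a = Σ_e Λ^a_e dx^e`
transports to `y^a_{(c)} = Σ_e Λ^a_e x^e_{(c)}`: the matrix of first-order symbols of `y` is
`Λ` times that of `x`. Taking determinants, `det(y^a_{(c)})` is `det Λ · det(x^a_{(c)})`, which
for invertible `Λ` makes the two determinants associated, and localizations away from associated
elements agree.
-/

namespace Paper

/-- Multi-indices: finitely supported functions `Fin d → ℕ`. -/
abbrev MIdx (d : ℕ) := Fin d →₀ ℕ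

/-- The length `|i|` of a multi-index. -/
def deg {d : ℕ} (i : MIdx d) : ℕ := i.sum fun _ n => n

variable (K R : Type) [Field K] [CharZero K] [CommRing R] [Algebra K R]

/-- The defining relations of the algebra `R^𝐝`. -/
def relSet (d : ℕ) : Set (MvPolynomial (R × MIdx d) R) :=
  {p | (∃ f g : R, ∃ i : MIdx d,
          p = MvPolynomial.X (f + g, i) - MvPolynomial.X (f, i) - MvPolynomial.X (g, i)) ∨
       (∃ f g : R, ∃ i : MIdx d,
          p = MvPolynomial.X (f * g, i) -
            ∑ q ∈ Finset.HasAntidiagonal.antidiagonal i, MvPolynomial.X (f, q.1) * MvPolynomial.X (g, q.2)) ∨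
       (∃ f : R, p = MvPolynomial.X (f, (0 : MIdx d)) - MvPolynomial.C f) ∨
       (∃ (c : K) (i : MIdx d), 1 ≤ deg i ∧ p = MvPolynomial.X (algebraMap K R c, i))}

/-- The commutative `R`-algebra `R^𝐝` generated by the symbols `f_i`. -/
def Rd (d : ℕ) : Type :=
  MvPolynomial (R × MIdx d) R ⧸ Ideal.span (relSet K R d)

noncomputable instance (d : ℕ) : CommRing (Rd K R d) := Ideal.Quotient.commRing _
noncomputable instance (d : ℕ) : Algebra R (Rd K R d) := Ideal.Quotient.algebra R
noncomputable instance (d : ℕ) : Algebra K (Rd K R d) := Ideal.Quotient.algebra K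

/-- The generator `f_i` of `R^𝐝`. -/
noncomputable def gen {d : ℕ} (f : R) (i : MIdx d) : Rd K R d :=
  Ideal.Quotient.mk (Ideal.span (relSet K R d)) (MvPolynomial.X (f, i))

/-- The Taylor series `I(f) = Σ_i f_i t^i ∈ R^𝐝[[t^1,…,t^d]]`. -/
noncomputable def Ifun {d : ℕ} (f : R) : MvPowerSeries (Fin d) (Rd K R d) :=
  fun i => gen K R f i

end Paper

theorem Derivation.apply_eq_sum_smul_of_D_eq {K R M : Type*} [CommRing K] [CommRing R]
    [Algebra K R] [AddCommGroup M] [Module K M] [Module R M] [IsScalarTower K R M]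
    (D : Derivation K R M) {ι : Type*} (s : Finset ι) {f : R} {x : ι → R} {l : ι → R}
    (h : KaehlerDifferential.D K R f = ∑ e ∈ s, l e • KaehlerDifferential.D K R (x e)) :
    D f = ∑ e ∈ s, l e • D (x e) := by
  simpa only [map_sum, LinearMap.map_smul, D.liftKaehlerDifferential_comp_D]
    using congrArg D.liftKaehlerDifferential h

namespace Paper

variable {K R : Type} [Field K] [CommRing R] [Algebra K R] {d : ℕ}

theorem mk_eq_zero_of_mem_relSet {p : MvPolynomial (R × MIdx d) R} (hp : p ∈ relSet K R d) :
    Ideal.Quotient.mk (Ideal.span (relSet K R d)) p = 0 :=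
  Ideal.Quotient.eq_zero_iff_mem.2 (Ideal.subset_span hp)

theorem gen_add (f g : R) (i : MIdx d) :
    gen K R (f + g) i = gen K R f i + gen K R g i := by
  have h := mk_eq_zero_of_mem_relSet (K := K) (Or.inl ⟨f, g, i, rfl⟩)
  rwa [map_sub, map_sub, sub_sub, sub_eq_zero] at h

theorem gen_mul (f g : R) (i : MIdx d) :
    gen K R (f * g) i =
      ∑ q ∈ Finset.HasAntidiagonal.antidiagonal i, gen K R f q.1 * gen K R g q.2 := by
  have h := mk_eq_zero_of_mem_relSet (K := K) (Or.inr (Or.inl ⟨f, g, i, rfl⟩))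
  simp only [map_sub, map_sum, map_mul, sub_eq_zero] at h
  exact h

theorem gen_zero (f : R) : gen K R f (0 : MIdx d) = algebraMap R (Rd K R d) f := by
  have h := mk_eq_zero_of_mem_relSet (K := K) (d := d) (Or.inr (Or.inr (Or.inl ⟨f, rfl⟩)))
  rwa [map_sub, sub_eq_zero] at h

theorem gen_algebraMap (c : K) {i : MIdx d} (hi : 1 ≤ deg i) :
    gen K R (algebraMap K R c) i = 0 :=
  mk_eq_zero_of_mem_relSet (Or.inr (Or.inr (Or.inr ⟨c, i, hi, rfl⟩)))

theorem deg_single_one (c : Fin d) : deg (Finsupp.single c 1 : MIdx d) = 1 := by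
  simp [deg, Finsupp.sum_single_index]

theorem gen_mul_single (f g : R) (c : Fin d) :
    gen K R (f * g) (Finsupp.single c 1) =
      algebraMap R (Rd K R d) f * gen K R g (Finsupp.single c 1) +
        gen K R f (Finsupp.single c 1) * algebraMap R (Rd K R d) g := by
  have h : Finset.HasAntidiagonal.antidiagonal (1 : ℕ) = {(0, 1), (1, 0)} := by decide
  rw [gen_mul, Finsupp.antidiagonal_single, Finset.sum_map, h,
    Finset.sum_insert (by decide), Finset.sum_singleton]
  simp only [Function.Embedding.coe_prodMap, Function.Embedding.coeFn_mk, Prod.map_apply,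
    Finsupp.single_zero, gen_zero]

instance : IsScalarTower K R (Rd K R d) :=
  IsScalarTower.of_algebraMap_eq fun _ => rfl

variable (K R) in
noncomputable def partialDeriv (c : Fin d) : Derivation K R (Rd K R d) where
  toFun f := gen K R f (Finsupp.single c 1)
  map_add' f g := gen_add f g _
  map_smul' k f := by
    rw [RingHom.id_apply, Algebra.smul_def, gen_mul_single,
      gen_algebraMap k (deg_single_one c).ge, zero_mul, add_zero, Algebra.smul_def,
      IsScalarTower.algebraMap_apply K R (Rd K R d)]
  map_one_eq_zero' := by
    simpa using gen_algebraMap (R := R) (1 : K) (deg_single_one c).ge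
  leibniz' f g := by
    change gen K R (f * g) _ = f • gen K R g _ + g • gen K R f _
    rw [gen_mul_single, Algebra.smul_def, Algebra.smul_def, mul_comm (gen K R f _)]

/-- `Rd` is a plain `def`, and the `AddCommGroup`-based module instances that
`liftKaehlerDifferential` asks for are only found on the underlying quotient. -/
theorem gen_single_eq_sum_of_D_eq {f : R} {x : Fin d → R} {l : Fin d → R}
    (h : KaehlerDifferential.D K R f = ∑ e, l e • KaehlerDifferential.D K R (x e)) (c : Fin d) :
    gen K R f (Finsupp.single c 1) =
      ∑ e, algebraMap R (Rd K R d) (l e) * gen K R (x e) (Finsupp.single c 1) := by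
  let Q := MvPolynomial (R × MIdx d) R ⧸ Ideal.span (relSet K R d)
  have := (show Derivation K R Q from partialDeriv K R c).apply_eq_sum_smul_of_D_eq Finset.univ h
  exact this.trans (Finset.sum_congr rfl fun _ _ => Algebra.smul_def (A := Q) _ _)

variable (K) in
noncomputable def firstOrderMatrix (x : Fin d → R) : Matrix (Fin d) (Fin d) (Rd K R d) :=
  Matrix.of fun a c => gen K R (x a) (Finsupp.single c 1)

theorem firstOrderMatrix_eq_map_mul {x y : Fin d → R} {Λ : Matrix (Fin d) (Fin d) R}
    (hΛ : ∀ a, KaehlerDifferential.D K R (y a) =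
      ∑ c, Λ a c • KaehlerDifferential.D K R (x c)) :
    firstOrderMatrix K y = Λ.map (algebraMap R (Rd K R d)) * firstOrderMatrix K x := by
  ext a c
  exact gen_single_eq_sum_of_D_eq (hΛ a) c

end Paper

theorem Localization.Away.isUnit_algebraMap_of_associated {A : Type*} [CommRing A] {s t : A}
    (h : Associated s t) : IsUnit (algebraMap A (Localization.Away s) t) := by
  obtain ⟨v, rfl⟩ := h
  rw [map_mul]
  exact (IsLocalization.Away.algebraMap_isUnit s).mul (v.isUnit.map _)

theorem Localization.Away.nonempty_algEquiv_of_associated {A : Type*} [CommRing A] {s t : A}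
    (h : Associated s t) : Nonempty (Localization.Away s ≃ₐ[A] Localization.Away t) :=
  have : IsLocalization.Away t (Localization.Away s) := IsLocalization.Away.of_associated h
  ⟨IsLocalization.algEquiv (Submonoid.powers t) _ _⟩

theorem statement2_general (K R : Type) [Field K] [CommRing R] [Algebra K R]
    (d : ℕ) (x : Fin d → R)
    (y : Fin d → R) (Λ : Matrix (Fin d) (Fin d) R)
    (hΛ : ∀ a : Fin d, KaehlerDifferential.D K R (y a) =
      ∑ c : Fin d, Λ a c • KaehlerDifferential.D K R (x c)) :
    (∀ a c : Fin d, Paper.gen K R (y a) (Finsupp.single c 1) =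
        ∑ e : Fin d, algebraMap R (Paper.Rd K R d) (Λ a e) *
          Paper.gen K R (x e) (Finsupp.single c 1)) ∧
    (Matrix.det (Matrix.of fun a c => Paper.gen K R (y a) (Finsupp.single c 1)) =
        algebraMap R (Paper.Rd K R d) Λ.det *
          Matrix.det (Matrix.of fun a c => Paper.gen K R (x a) (Finsupp.single c 1))) ∧
    (IsUnit Λ.det →
      IsUnit (algebraMap (Paper.Rd K R d)
          (Localization.Away
            (Matrix.det (Matrix.of fun a c => Paper.gen K R (x a) (Finsupp.single c 1))))
          (Matrix.det (Matrix.of fun a c => Paper.gen K R (y a) (Finsupp.single c 1)))) ∧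
      Nonempty
        ((Localization.Away
            (Matrix.det (Matrix.of fun a c => Paper.gen K R (x a) (Finsupp.single c 1)))) ≃ₐ[Paper.Rd K R d]
         (Localization.Away
            (Matrix.det (Matrix.of fun a c => Paper.gen K R (y a) (Finsupp.single c 1)))))) := by
  open Paper in
  have hdet : (firstOrderMatrix K y).det =
      algebraMap R (Rd K R d) Λ.det * (firstOrderMatrix K x).det := by
    rw [firstOrderMatrix_eq_map_mul hΛ, Matrix.det_mul, RingHom.map_det, RingHom.mapMatrix_apply]
  refine ⟨fun a => gen_single_eq_sum_of_D_eq (hΛ a), hdet, fun hU => ?_⟩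
  have hassoc : Associated (firstOrderMatrix K x).det (firstOrderMatrix K y).det :=
    hdet ▸ (associated_unit_mul_left _ _ (hU.map _)).symm
  exact ⟨Localization.Away.isUnit_algebraMap_of_associated hassoc,
    Localization.Away.nonempty_algEquiv_of_associated hassoc⟩

/-- Change of parameters: `y^a_{(b)} = Σ_c Λ^a_c x^c_{(b)}`,
`det(y^a_{(b)}) = det(Λ)·det(x^a_{(b)})`, and if `Λ` is invertible then the image
of `det(y^a_{(b)})` in the localization of `R^𝐝` at `det(x^a_{(b)})` is a unit, and
the two localizations are isomorphic as `R^𝐝`-algebras. -/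
theorem statement2 (K R : Type) [Field K] [CharZero K] [CommRing R] [Algebra K R]
    (d : ℕ) (hd : 1 ≤ d) (x : Fin d → R)
    (b : Module.Basis (Fin d) R (KaehlerDifferential K R))
    (hb : ∀ a : Fin d, b a = KaehlerDifferential.D K R (x a))
    (y : Fin d → R) (Λ : Matrix (Fin d) (Fin d) R)
    (hΛ : ∀ a : Fin d, KaehlerDifferential.D K R (y a) =
      ∑ c : Fin d, Λ a c • KaehlerDifferential.D K R (x c)) :
    (∀ a c : Fin d, Paper.gen K R (y a) (Finsupp.single c 1) =
        ∑ e : Fin d, algebraMap R (Paper.Rd K R d) (Λ a e) *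
          Paper.gen K R (x e) (Finsupp.single c 1)) ∧
    (Matrix.det (Matrix.of fun a c => Paper.gen K R (y a) (Finsupp.single c 1)) =
        algebraMap R (Paper.Rd K R d) Λ.det *
          Matrix.det (Matrix.of fun a c => Paper.gen K R (x a) (Finsupp.single c 1))) ∧
    (IsUnit Λ.det →
      IsUnit (algebraMap (Paper.Rd K R d)
          (Localization.Away
            (Matrix.det (Matrix.of fun a c => Paper.gen K R (x a) (Finsupp.single c 1))))
          (Matrix.det (Matrix.of fun a c => Paper.gen K R (y a) (Finsupp.single c 1)))) ∧
      Nonempty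
        ((Localization.Away
            (Matrix.det (Matrix.of fun a c => Paper.gen K R (x a) (Finsupp.single c 1)))) ≃ₐ[Paper.Rd K R d]
         (Localization.Away
            (Matrix.det (Matrix.of fun a c => Paper.gen K R (y a) (Finsupp.single c 1)))))) :=
  statement2_general K R d x y Λ hΛ
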